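/- Let N ≥ 1, let y_1, …, y_N be distinct points in ℝ², let λ > 0, and let f = (f_1, …, f_N) ∈ ℝ^N be nonzero. Then Σ_{j,k=1}^N f_j f_k / (|y_j − y_k|² + λ) > 0; that is, the N×N matrix with entries 1/(|y_j − y_k|² + λ) is positive definite. -/

import Mathlib

/-!
Write `1 / (‖a - b‖² + λ) = ∫₀^∞ e^{-λt} e^{-t‖a - b‖²} dt`. For each `t ≥ 0` the Gaussian matrix
`e^{-t‖y_j - y_k‖²}` is positive semidefinite: it is the Hadamard product of the rank-one matrix
`e^{-t‖y_j‖²} e^{-t‖y_k‖²}` with the entrywise exponential of the Gram matrix `2t ⟨y_j, y_k⟩`,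
and the entrywise exponential of a positive semidefinite matrix is a limit of nonnegative
combinations of its Hadamard powers (Schur product theorem). For distinct points the Gaussian
matrix tends to the identity as `t → ∞`, so the integrand of the quadratic form is nonnegative
and eventually positive, which makes the integral positive.
-/

open Matrix Set Filter Topology MeasureTheory

namespace Matrix

theorem isClosed_setOf_posSemidef {n R : Type*} [Ring R] [PartialOrder R] [StarRing R]
    [TopologicalSpace R] [IsTopologicalRing R] [ContinuousStar R] [OrderClosedTopology R] :
    IsClosed {A : Matrix n n R | A.PosSemidef} := by
  have hset : {A : Matrix n n R | A.PosSemidef} = {A | Aᴴ = A} ∩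
      ⋂ x : n →₀ R, {A | 0 ≤ x.sum fun i xi ↦ x.sum fun j xj ↦ star xi * A i j * xj} := by
    ext A
    simp [PosSemidef, IsHermitian]
  rw [hset]
  refine (isClosed_eq continuous_id.matrix_conjTranspose continuous_id).inter <|
    isClosed_iInter fun x => isClosed_le continuous_const ?_
  simp only [Finsupp.sum]
  fun_prop

theorem star_dotProduct_mulVec_eq_sum {n R : Type*} [Fintype n] [CommSemiring R] [StarRing R]
    [TrivialStar R] (A : Matrix n n R) (x : n → R) :
    star x ⬝ᵥ (A *ᵥ x) = ∑ i, ∑ j, x i * x j * A i j := by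
  simp only [dotProduct, mulVec, star_trivial, Finset.mul_sum]
  exact Finset.sum_congr rfl fun i _ => Finset.sum_congr rfl fun j _ => by ring

theorem tendsto_exp_neg_mul_norm_sub_sq_atTop {n E : Type*} [DecidableEq n]
    [NormedAddCommGroup E] {y : n → E} (hy : Function.Injective y) :
    Tendsto (fun t : ℝ => of fun i j => Real.exp (-t * ‖y i - y j‖ ^ 2)) atTop (𝓝 1) := by
  refine tendsto_pi_nhds.2 fun i => tendsto_pi_nhds.2 fun j => ?_
  rcases eq_or_ne i j with rfl | hij
  · simp
  · have hd : 0 < ‖y i - y j‖ ^ 2 := by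
      have := sub_ne_zero.2 (hy.ne hij)
      positivity
    simpa [one_apply_ne hij] using tendsto_id.atTop_mul_const hd

section Schur

open scoped ComplexOrder

variable {n : Type*} [Finite n]

theorem PosSemidef.map_pow {𝕜 : Type*} [RCLike 𝕜] {A : Matrix n n 𝕜} (hA : A.PosSemidef)
    (k : ℕ) : (A.map (· ^ k)).PosSemidef := by
  induction k with
  | zero =>
    convert posSemidef_vecMulVec_self_star (fun _ : n => (1 : 𝕜)) using 1
    ext
    simp [vecMulVec]
  | succ k ih =>
    convert ih.hadamard hA using 1
    ext i j
    simp [pow_succ]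

theorem PosSemidef.map_exp {A : Matrix n n ℝ} (hA : A.PosSemidef) :
    (A.map Real.exp).PosSemidef := by
  have hsum : HasSum (fun k : ℕ => (k.factorial : ℝ)⁻¹ • A.map (· ^ k)) (A.map Real.exp) := by
    refine Pi.hasSum.2 fun i => Pi.hasSum.2 fun j => ?_
    simpa [Real.exp_eq_exp_ℝ, div_eq_inv_mul] using NormedSpace.expSeries_div_hasSum_exp (A i j)
  refine isClosed_setOf_posSemidef.mem_of_tendsto hsum.tendsto_sum_nat
    (Eventually.of_forall fun m => posSemidef_sum _ fun k _ => ?_)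
  exact (hA.map_pow k).smul (by positivity)

theorem posSemidef_exp_neg_mul_norm_sub_sq {E : Type*} [NormedAddCommGroup E]
    [InnerProductSpace ℝ E] (y : n → E) {t : ℝ} (ht : 0 ≤ t) :
    (of fun i j => Real.exp (-t * ‖y i - y j‖ ^ 2)).PosSemidef := by
  set u : n → ℝ := fun i => Real.exp (-t * ‖y i‖ ^ 2)
  have hG := ((posSemidef_gram ℝ y).smul (by positivity : 0 ≤ 2 * t)).map_exp
  have hfactor : (of fun i j => Real.exp (-t * ‖y i - y j‖ ^ 2)) =
      vecMulVec u (star u) ⊙ ((2 * t) • gram ℝ y).map Real.exp := by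
    ext i j
    simp only [of_apply, hadamard_apply, vecMulVec_apply, map_apply, smul_apply, gram_apply,
      star_trivial, smul_eq_mul, u, ← Real.exp_add, norm_sub_sq_real]
    ring_nf
  rw [hfactor]
  exact (posSemidef_vecMulVec_self_star u).hadamard hG

end Schur

end Matrix

theorem integral_exp_neg_mul_Ioi_zero {b : ℝ} (hb : 0 < b) :
    ∫ t in Ioi 0, Real.exp (-b * t) = b⁻¹ := by
  rw [integral_exp_mul_Ioi (neg_neg_of_pos hb) 0]
  simp [div_neg, neg_div]

theorem setIntegral_Ioi_pos_of_eventually_pos {f : ℝ → ℝ} {a : ℝ} (hf : IntegrableOn f (Ioi a))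
    (h0 : ∀ t ∈ Ioi a, 0 ≤ f t) (hpos : ∀ᶠ t in atTop, 0 < f t) :
    0 < ∫ t in Ioi a, f t := by
  rw [setIntegral_pos_iff_support_of_nonneg_ae ((ae_restrict_iff' measurableSet_Ioi).2
    (ae_of_all _ h0)) hf]
  obtain ⟨T, hT⟩ := eventually_atTop.1 hpos
  have hsub : Ioi (max T a) ⊆ Function.support f ∩ Ioi a := fun t ht =>
    ⟨(hT t (le_of_max_le_left ht.le)).ne', (le_max_right T a).trans_lt ht⟩
  exact (Measure.measure_Ioi_pos volume (max T a)).trans_le (measure_mono hsub)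

theorem Matrix.posDef_inv_norm_sub_sq_add {n E : Type*} [Fintype n] [NormedAddCommGroup E]
    [InnerProductSpace ℝ E] {y : n → E} (hy : Function.Injective y) {c : ℝ} (hc : 0 < c) :
    (of fun i j => (‖y i - y j‖ ^ 2 + c)⁻¹).PosDef := by
  classical
  refine .of_dotProduct_mulVec_pos (ext fun i j => by simp [norm_sub_rev]) fun x hx => ?_
  set G : ℝ → Matrix n n ℝ := fun t => of fun i j => Real.exp (-t * ‖y i - y j‖ ^ 2)
  have hb : ∀ i j, 0 < ‖y i - y j‖ ^ 2 + c := fun i j => by positivity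
  have hexpand : (fun t => Real.exp (-c * t) * (star x ⬝ᵥ (G t *ᵥ x))) =
      fun t => ∑ i, ∑ j, x i * x j * Real.exp (-(‖y i - y j‖ ^ 2 + c) * t) := by
    ext t
    simp only [star_dotProduct_mulVec_eq_sum, G, of_apply, Finset.mul_sum]
    refine Finset.sum_congr rfl fun i _ => Finset.sum_congr rfl fun j _ => ?_
    rw [mul_left_comm, ← Real.exp_add]
    ring_nf
  have hint : ∀ i j, IntegrableOn (fun t => x i * x j * Real.exp (-(‖y i - y j‖ ^ 2 + c) * t))
      (Ioi 0) := fun i j => (exp_neg_integrableOn_Ioi 0 (hb i j)).const_mul _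
  have hlaplace : star x ⬝ᵥ ((of fun i j => (‖y i - y j‖ ^ 2 + c)⁻¹) *ᵥ x) =
      ∫ t in Ioi 0, Real.exp (-c * t) * (star x ⬝ᵥ (G t *ᵥ x)) := by
    rw [hexpand, integral_finsetSum _ fun i _ => integrable_finsetSum _ fun j _ => hint i j,
      star_dotProduct_mulVec_eq_sum]
    refine Finset.sum_congr rfl fun i _ => ?_
    rw [integral_finsetSum _ fun j _ => hint i j]
    refine Finset.sum_congr rfl fun j _ => ?_
    rw [integral_const_mul, integral_exp_neg_mul_Ioi_zero (hb i j), of_apply]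
  have hlim : Tendsto (fun t => star x ⬝ᵥ (G t *ᵥ x)) atTop
      (𝓝 (star x ⬝ᵥ ((1 : Matrix n n ℝ) *ᵥ x))) :=
    ((continuous_const.dotProduct (continuous_id.matrix_mulVec continuous_const)).tendsto 1).comp
      (tendsto_exp_neg_mul_norm_sub_sq_atTop hy)
  rw [hlaplace]
  refine setIntegral_Ioi_pos_of_eventually_pos ?_ (fun t ht => ?_) ?_
  · rw [hexpand]
    exact integrable_finsetSum _ fun i _ => integrable_finsetSum _ fun j _ => hint i j
  · exact mul_nonneg (Real.exp_pos _).le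
      ((posSemidef_exp_neg_mul_norm_sub_sq y (le_of_lt ht)).dotProduct_mulVec_nonneg x)
  · filter_upwards [hlim.eventually (eventually_gt_nhds (PosDef.one.dotProduct_mulVec_pos hx))]
      with t ht
    exact mul_pos (Real.exp_pos _) ht

theorem stmt_8_general (N : ℕ)
    (y : Fin N → EuclideanSpace ℝ (Fin 2)) (hy : Function.Injective y)
    (lam : ℝ) (hlam : 0 < lam)
    (f : Fin N → ℝ) (hf : f ≠ 0) :
    0 < ∑ j, ∑ k, f j * f k / (‖y j - y k‖^2 + lam) := by
  have h := (Matrix.posDef_inv_norm_sub_sq_add hy hlam).dotProduct_mulVec_pos hf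
  rw [Matrix.star_dotProduct_mulVec_eq_sum] at h
  simpa [div_eq_mul_inv] using h

/-- For distinct points `y_1, …, y_N` of `ℝ²`, `λ > 0`, and
`f ∈ ℝ^N` nonzero, `Σ_{j,k} f_j f_k / (|y_j - y_k|² + λ) > 0`: the matrix with
entries `1/(|y_j - y_k|² + λ)` is positive definite. -/
theorem stmt_8 (N : ℕ) (hN : 1 ≤ N)
    (y : Fin N → EuclideanSpace ℝ (Fin 2)) (hy : Function.Injective y)
    (lam : ℝ) (hlam : 0 < lam)
    (f : Fin N → ℝ) (hf : f ≠ 0) :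
    0 < ∑ j, ∑ k, f j * f k / (‖y j - y k‖^2 + lam) :=
  stmt_8_general N y hy lam hlam f hf
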